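/- arXiv:2506.22848 — 4 statements merged into one kernel-verified Lean document; each statement's English description precedes it below -/
import Mathlib

section
/- Let Q : Finset Θ → ℝ be monotone and submodular with Q(∅) = 0, let A* be a set of size k, and let A_0 = ∅, A_{i+1} = A_i ∪ {θ_{i+1}} be a greedy sequence where each θ_{i+1} satisfies Q(A_i ∪ {θ_{i+1}}) − Q(A_i) ≥ max_{θ ∈ A*} (Q(A_i ∪ {θ}) − Q(A_i)) − ε for some ε ≥ 0. Then for every i < k, Q(A*) ≤ Q(A_i) + k·(Q(A_{i+1}) − Q(A_i) + ε). -/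
lemma sub_sum {Θ : Type*} [DecidableEq Θ] (Q : Finset Θ → ℝ)
    (hsub : ∀ (A A' : Finset Θ) (θ : Θ),
      Q (A ∪ A' ∪ {θ}) - Q (A ∪ A') ≤ Q (A ∪ {θ}) - Q A)
    (S T : Finset Θ) :
    Q (S ∪ T) - Q S ≤ ∑ θ ∈ T, (Q (insert θ S) - Q S) := by
  induction T using Finset.induction_on with
  | empty => simp
  | @insert θ T' hθ ih =>
    rw [Finset.sum_insert hθ]
    have h1 := hsub S T' θ
    have : S ∪ insert θ T' = S ∪ T' ∪ {θ} := by
      ext x; simp [or_comm, or_assoc, or_left_comm]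
    rw [this]
    have h2 : Q (S ∪ {θ}) = Q (insert θ S) := by
      congr 1; ext x; simp [or_comm]
    linarith

/-- Key greedy inequality: `Q(A*) ≤ Q(A_i) + k·(Q(A_{i+1}) − Q(A_i) + ε)`. -/
theorem stmt_3 {Θ : Type*} [DecidableEq Θ] (Q : Finset Θ → ℝ)
    (hmono : ∀ A B : Finset Θ, A ⊆ B → Q A ≤ Q B)
    (hsub : ∀ (A A' : Finset Θ) (θ : Θ),
      Q (A ∪ A' ∪ {θ}) - Q (A ∪ A') ≤ Q (A ∪ {θ}) - Q A)
    (hempty : Q ∅ = 0)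
    (k : ℕ) (hk : 1 ≤ k) (Astar : Finset Θ) (hcard : Astar.card = k)
    (ε : ℝ) (hε : 0 ≤ ε)
    (A : ℕ → Finset Θ) (θseq : ℕ → Θ)
    (hA0 : A 0 = ∅) (hAsucc : ∀ i, A (i + 1) = insert (θseq (i + 1)) (A i))
    (hgreedy : ∀ i, ∀ θ ∈ Astar,
      Q (insert θ (A i)) - Q (A i) ≤ (Q (A (i + 1)) - Q (A i)) + ε) :
    ∀ i < k, Q Astar ≤ Q (A i) + (k : ℝ) * (Q (A (i + 1)) - Q (A i) + ε) := by
  intro i _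
  have h1 : Q Astar ≤ Q (A i ∪ Astar) := hmono _ _ Finset.subset_union_right
  have h2 := sub_sum Q hsub (A i) Astar
  have h3 : ∑ θ ∈ Astar, (Q (insert θ (A i)) - Q (A i))
      ≤ ∑ _θ ∈ Astar, ((Q (A (i + 1)) - Q (A i)) + ε) :=
    Finset.sum_le_sum fun θ hθ => hgreedy i θ hθ
  rw [Finset.sum_const, hcard, nsmul_eq_mul] at h3
  linarith
end

section
/- Let Q : Finset Θ → ℝ be monotone and submodular with Q(∅) = 0, and let A* be an optimal set of size k maximizing Q among all sets of size at most k. Suppose the greedy sequence A_0 = ∅, A_{i+1} = A_i ∪ {θ_{i+1}} satisfies, for each i, Q(A_{i+1}) − Q(A_i) ≥ sup_{θ ∈ Θ} (Q(A_i ∪ {θ}) − Q(A_i)) − ε where ε ≥ 0 (and the sup is attained). Then Q(A_k) ≥ (1 − 1/e)·Q(A*) − k·ε. -/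
/-- Additive-error greedy guarantee: `Q(A_k) ≥ (1 − 1/e)·Q(A*) − kε`. -/
theorem stmt_7 {Θ : Type*} [DecidableEq Θ] (Q : Finset Θ → ℝ)
    (hmono : ∀ A B : Finset Θ, A ⊆ B → Q A ≤ Q B)
    (hsub : ∀ (A A' : Finset Θ) (θ : Θ),
      Q (A ∪ A' ∪ {θ}) - Q (A ∪ A') ≤ Q (A ∪ {θ}) - Q A)
    (hempty : Q ∅ = 0)
    (k : ℕ) (hk : 1 ≤ k) (ε : ℝ) (hε : 0 ≤ ε)
    (Astar : Finset Θ) (hcard : Astar.card = k)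
    (hopt : ∀ B : Finset Θ, B.card ≤ k → Q B ≤ Q Astar)
    (A : ℕ → Finset Θ) (θseq : ℕ → Θ)
    (hA0 : A 0 = ∅) (hAsucc : ∀ i, A (i + 1) = insert (θseq (i + 1)) (A i))
    (hgreedy : ∀ i, ∀ θ : Θ,
      Q (insert θ (A i)) - Q (A i) ≤ (Q (A (i + 1)) - Q (A i)) + ε) :
    Q (A k) ≥ (1 - 1 / Real.exp 1) * Q Astar - (k : ℝ) * ε := by
  have hkR : (0:ℝ) < (k:ℝ) := by exact_mod_cast Nat.lt_of_lt_of_le Nat.zero_lt_one hk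
  have hQ0 : 0 ≤ Q Astar := hempty ▸ hmono ∅ Astar (Finset.empty_subset _)
  -- submodular telescoping sum
  have hsum : ∀ (S B : Finset Θ), Q (B ∪ S) - Q B ≤ ∑ θ ∈ S, (Q (B ∪ {θ}) - Q B) := by
    intro S
    induction S using Finset.induction_on with
    | empty => intro B; simp
    | @insert a s ha ih =>
        intro B
        have h1 : B ∪ insert a s = B ∪ s ∪ {a} := by
          ext x; simp [Finset.mem_union, Finset.mem_insert]
        have h2 := hsub B s a
        have h3 := ih B
        rw [Finset.sum_insert ha, h1]
        linarith
  -- key per-step bound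
  have hkey : ∀ i, Q Astar - Q (A i) ≤ (k:ℝ) * ((Q (A (i+1)) - Q (A i)) + ε) := by
    intro i
    have h1 : Q Astar ≤ Q (A i ∪ Astar) := hmono _ _ Finset.subset_union_right
    have h2 := hsum Astar (A i)
    have h3 : ∑ θ ∈ Astar, (Q (A i ∪ {θ}) - Q (A i))
        ≤ ∑ θ ∈ Astar, ((Q (A (i+1)) - Q (A i)) + ε) := by
      apply Finset.sum_le_sum
      intro θ _
      have hg := hgreedy i θ
      have heq : A i ∪ {θ} = insert θ (A i) := by
        ext x; simp [Finset.mem_union, Finset.mem_insert, or_comm]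
      rw [heq]
      linarith
    rw [Finset.sum_const, hcard, nsmul_eq_mul] at h3
    linarith
  have hkne : (k:ℝ) ≠ 0 := ne_of_gt hkR
  obtain ⟨c, hc⟩ : ∃ c : ℝ, c = 1 - 1 / (k:ℝ) := ⟨_, rfl⟩
  have hc0 : 0 ≤ c := by
    have h : 1 / (k:ℝ) ≤ 1 := by
      rw [div_le_one hkR]; exact_mod_cast hk
    rw [hc]; linarith
  have hc1 : c ≤ 1 := by
    have h : 0 ≤ 1 / (k:ℝ) := by positivity
    rw [hc]; linarith
  -- recursion
  have hrec : ∀ i, Q Astar - Q (A i) ≤ c ^ i * Q Astar + (i:ℝ) * ε := by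
    intro i
    induction i with
    | zero => simp [hA0, hempty]
    | succ i ih =>
        have hki := hkey i
        have hdiv : (Q Astar - Q (A i)) / (k:ℝ) ≤ (Q (A (i+1)) - Q (A i)) + ε := by
          rw [div_le_iff₀ hkR]
          linarith [hki]
        have step : Q Astar - Q (A (i+1)) ≤ c * (Q Astar - Q (A i)) + ε := by
          have : c * (Q Astar - Q (A i)) =
              (Q Astar - Q (A i)) - (Q Astar - Q (A i)) / (k:ℝ) := by
            rw [hc]; field_simp
          linarith [this, hdiv]
        have hmul : c * (Q Astar - Q (A i)) ≤ c * (c ^ i * Q Astar + (i:ℝ) * ε) :=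
          mul_le_mul_of_nonneg_left ih hc0
        have hiε : c * ((i:ℝ) * ε) ≤ (i:ℝ) * ε := by
          have hi0 : 0 ≤ (i:ℝ) * ε := by positivity
          nlinarith
        have : c * (c ^ i * Q Astar + (i:ℝ) * ε) ≤ c ^ (i+1) * Q Astar + (i:ℝ) * ε := by
          have : c * (c ^ i * Q Astar) = c ^ (i+1) * Q Astar := by ring
          nlinarith [hiε]
        push_cast
        linarith [step, hmul, this]
  -- (1 - 1/k)^k ≤ exp(-1)
  have hexp : c ^ k ≤ Real.exp (-1) := by
    have h1 : c ≤ Real.exp (-(1 / (k:ℝ))) := by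
      have h := Real.add_one_le_exp (-(1 / (k:ℝ)))
      rw [hc]; linarith
    have h2 : c ^ k ≤ Real.exp (-(1 / (k:ℝ))) ^ k := pow_le_pow_left₀ hc0 h1 k
    have h3 : Real.exp (-(1 / (k:ℝ))) ^ k = Real.exp ((k:ℝ) * (-(1 / (k:ℝ)))) := by
      rw [Real.exp_nat_mul]
    have h4 : (k:ℝ) * (-(1 / (k:ℝ))) = -1 := by
      field_simp
    rw [h3, h4] at h2
    exact h2
  have hfin := hrec k
  have : c ^ k * Q Astar ≤ Real.exp (-1) * Q Astar :=
    mul_le_mul_of_nonneg_right hexp hQ0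
  have hinv : Real.exp (-1) = 1 / Real.exp 1 := by
    rw [Real.exp_neg]; ring
  rw [hinv] at this
  linarith [hfin, this]
end

section
/- Under the same setting (Q monotone, submodular, Q(∅) = 0, A* of size k), if each greedy step satisfies the relative-error guarantee Q(A_{i+1}) − Q(A_i) ≥ (1 − ε)·max_{θ ∈ A*}(Q(A_i ∪ {θ}) − Q(A_i)) with 0 ≤ ε ≤ 1, then for every l with 0 ≤ l ≤ k, Q(A_l) ≥ (1 − e^{−l(1−ε)/k})·Q(A*). In particular, Q(A_k) ≥ (1 − e^{−(1−ε)})·Q(A*). -/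
lemma tele_aux {Θ : Type*} [DecidableEq Θ] (Q : Finset Θ → ℝ)
    (hsub : ∀ (A A' : Finset Θ) (θ : Θ),
      Q (A ∪ A' ∪ {θ}) - Q (A ∪ A') ≤ Q (A ∪ {θ}) - Q A)
    (B : Finset Θ) : ∀ S : Finset Θ,
      Q (B ∪ S) - Q B ≤ ∑ θ ∈ S, (Q (B ∪ {θ}) - Q B) := by
  intro S
  induction S using Finset.induction_on with
  | empty => simp
  | @insert a s ha ih =>
    rw [Finset.sum_insert ha]
    have h1 : Q (B ∪ insert a s) - Q (B ∪ s) ≤ Q (B ∪ {a}) - Q B := by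
      have := hsub B s a
      have he : B ∪ s ∪ {a} = B ∪ insert a s := by
        ext x; simp [Finset.mem_insert, or_comm, or_left_comm, or_assoc]
      rwa [he] at this
    linarith

/-- Relative-error greedy guarantee: `Q(A_l) ≥ (1 − e^{−l(1−ε)/k})·Q(A*)`. -/
theorem stmt_8 {Θ : Type*} [DecidableEq Θ] (Q : Finset Θ → ℝ)
    (hmono : ∀ A B : Finset Θ, A ⊆ B → Q A ≤ Q B)
    (hsub : ∀ (A A' : Finset Θ) (θ : Θ),
      Q (A ∪ A' ∪ {θ}) - Q (A ∪ A') ≤ Q (A ∪ {θ}) - Q A)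
    (hempty : Q ∅ = 0) (hpos : ∀ A : Finset Θ, 0 ≤ Q A)
    (k : ℕ) (hk : 1 ≤ k) (ε : ℝ) (hε0 : 0 ≤ ε) (hε1 : ε ≤ 1)
    (Astar : Finset Θ) (hcard : Astar.card = k)
    (A : ℕ → Finset Θ) (θseq : ℕ → Θ)
    (hA0 : A 0 = ∅) (hAsucc : ∀ i, A (i + 1) = insert (θseq (i + 1)) (A i))
    (hgreedy : ∀ i, ∀ θ ∈ Astar,
      (1 - ε) * (Q (insert θ (A i)) - Q (A i)) ≤ Q (A (i + 1)) - Q (A i)) :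
    (∀ l ≤ k, Q (A l) ≥ (1 - Real.exp (-(l : ℝ) * (1 - ε) / (k : ℝ))) * Q Astar)
    ∧ Q (A k) ≥ (1 - Real.exp (-(1 - ε))) * Q Astar := by
  have hkpos : (0:ℝ) < k := by exact_mod_cast hk
  set δ : ℕ → ℝ := fun i => Q Astar - Q (A i) with hδ
  set r : ℝ := 1 - (1 - ε) / k with hr
  have hr0 : 0 ≤ r := by
    have h1 : (1 - ε) / k ≤ 1 / 1 := by
      apply div_le_div₀ (by norm_num) (by linarith) one_pos (by exact_mod_cast hk)
    simp at h1
    simp [hr]; linarith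
  -- one-step recursion
  have hstep : ∀ i, δ (i+1) ≤ r * δ i := by
    intro i
    have htel := tele_aux Q hsub (A i) Astar
    have hsum : ∑ θ ∈ Astar, (1 - ε) * (Q (A i ∪ {θ}) - Q (A i))
        ≤ (k : ℝ) * (Q (A (i+1)) - Q (A i)) := by
      rw [← hcard]
      calc ∑ θ ∈ Astar, (1 - ε) * (Q (A i ∪ {θ}) - Q (A i))
            ≤ ∑ _θ ∈ Astar, (Q (A (i+1)) - Q (A i)) := by
              apply Finset.sum_le_sum
              intro θ hθ
              have := hgreedy i θ hθ
              have he : A i ∪ {θ} = insert θ (A i) := by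
                ext x; simp [or_comm]
              rw [he]; exact this
        _ = (Astar.card : ℝ) * (Q (A (i+1)) - Q (A i)) := by
              rw [Finset.sum_const, nsmul_eq_mul]
    have hmono' : Q Astar ≤ Q (A i ∪ Astar) := hmono _ _ (Finset.subset_union_right)
    have hkey : (1 - ε) * δ i ≤ (k : ℝ) * (Q (A (i+1)) - Q (A i)) := by
      have h2 : (1 - ε) * (Q (A i ∪ Astar) - Q (A i)) ≤
          ∑ θ ∈ Astar, (1 - ε) * (Q (A i ∪ {θ}) - Q (A i)) := by
        rw [← Finset.mul_sum]
        exact mul_le_mul_of_nonneg_left htel (by linarith)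
      have h3 : (1 - ε) * δ i ≤ (1 - ε) * (Q (A i ∪ Astar) - Q (A i)) := by
        apply mul_le_mul_of_nonneg_left _ (by linarith)
        simp only [hδ]; linarith
      linarith
    have : δ i - δ (i+1) = Q (A (i+1)) - Q (A i) := by simp [hδ]
    have hkey2 : (1 - ε) * δ i ≤ (k : ℝ) * (δ i - δ (i+1)) := by rw [this]; exact hkey
    have : (k:ℝ) * δ (i+1) ≤ (k:ℝ) * (r * δ i) := by
      have h4 : (k:ℝ) * (r * δ i) = k * δ i - (1-ε) * δ i := by
        rw [hr]; field_simp
      rw [h4]; linarith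
    exact le_of_mul_le_mul_left this hkpos
  have hδ0 : δ 0 = Q Astar := by simp [hδ, hA0, hempty]
  have hδnn : ∀ i, 0 ≤ δ i ∨ True := fun _ => Or.inr trivial
  have hiter : ∀ l : ℕ, δ l ≤ r ^ l * Q Astar := by
    intro l
    induction l with
    | zero => simp [hδ0]
    | succ n ih =>
      calc δ (n+1) ≤ r * δ n := hstep n
        _ ≤ r * (r ^ n * Q Astar) := mul_le_mul_of_nonneg_left ih hr0
        _ = r ^ (n+1) * Q Astar := by ring
  have hexp : ∀ l : ℕ, r ^ l ≤ Real.exp (-(l : ℝ) * (1 - ε) / k) := by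
    intro l
    have h1 : r ≤ Real.exp (-((1 - ε) / k)) := by
      have := Real.add_one_le_exp (-((1 - ε) / k))
      simp [hr]; linarith
    calc r ^ l ≤ (Real.exp (-((1 - ε) / k))) ^ l := pow_le_pow_left₀ hr0 h1 l
      _ = Real.exp ((l:ℝ) * (-((1 - ε) / k))) := by
          rw [← Real.exp_nat_mul]
      _ = Real.exp (-(l : ℝ) * (1 - ε) / k) := by ring_nf
  have main : ∀ l : ℕ, Q (A l) ≥ (1 - Real.exp (-(l : ℝ) * (1 - ε) / (k : ℝ))) * Q Astar := by
    intro l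
    have h1 : δ l ≤ Real.exp (-(l : ℝ) * (1 - ε) / k) * Q Astar :=
      le_trans (hiter l) (mul_le_mul_of_nonneg_right (hexp l) (hpos Astar))
    simp only [hδ] at h1
    nlinarith [hpos Astar]
  constructor
  · intro l _; exact main l
  · have := main k
    have he : -(k : ℝ) * (1 - ε) / k = -(1 - ε) := by field_simp
    rwa [he] at this
end

section
/- Let Q be a monotone submodular set function with Q(∅) = 0 and let (A_i) be the ε-additive approximate greedy sequence (each step within ε ≥ 0 of the best marginal gain over Θ). Then for every l with 0 ≤ l ≤ k and every A* with |A*| = k, Q(A_l) ≥ (1 − e^{−l/k})·Q(A*) − k·ε. -/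
/-!
If `S` has `k` elements, submodularity and
monotonicity give `Q S - Q Aᵢ ≤ ∑_{θ ∈ S} (Q (Aᵢ ∪ {θ}) - Q Aᵢ) ≤ k (Q Aᵢ₊₁ - Q Aᵢ + ε)`, so the gap
`Q S - Q Aᵢ` contracts by the factor `1 - 1/k` at each step, up to an additive `ε`. Unrolling,
the gap after `l` steps is at most `(1 - 1/k)^l Q S + l ε ≤ e^{-l/k} Q S + k ε`.
-/

open Finset

section Submodular

variable {Θ β : Type*} [DecidableEq Θ] [AddCommGroup β] [PartialOrder β] [IsOrderedAddMonoid β]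
  {Q : Finset Θ → β}

theorem le_add_sum_marginal_of_submodular
    (hsub : ∀ (A A' : Finset Θ) (θ : Θ), Q (A ∪ A' ∪ {θ}) - Q (A ∪ A') ≤ Q (A ∪ {θ}) - Q A)
    (B S : Finset Θ) :
    Q (B ∪ S) ≤ Q B + ∑ θ ∈ S, (Q (insert θ B) - Q B) := by
  induction S using Finset.induction_on with
  | empty => simp
  | @insert a S ha ih =>
    have hstep := hsub B S a
    rw [union_singleton, union_singleton, ← union_insert] at hstep
    rw [sum_insert ha]
    calc Q (B ∪ insert a S)
        = Q (B ∪ insert a S) - Q (B ∪ S) + Q (B ∪ S) := (sub_add_cancel _ _).symm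
      _ ≤ (Q (insert a B) - Q B) + (Q B + ∑ θ ∈ S, (Q (insert θ B) - Q B)) := add_le_add hstep ih
      _ = _ := by abel

theorem sub_le_card_nsmul_of_marginal_le
    (hmono : ∀ A B : Finset Θ, A ⊆ B → Q A ≤ Q B)
    (hsub : ∀ (A A' : Finset Θ) (θ : Θ), Q (A ∪ A' ∪ {θ}) - Q (A ∪ A') ≤ Q (A ∪ {θ}) - Q A)
    {B : Finset Θ} {g : β} (hg : ∀ θ, Q (insert θ B) - Q B ≤ g) (S : Finset Θ) :
    Q S - Q B ≤ #S • g := by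
  have hsum : ∑ θ ∈ S, (Q (insert θ B) - Q B) ≤ #S • g := by
    simpa using sum_le_sum fun θ (_ : θ ∈ S) => hg θ
  have hS := (hmono _ _ subset_union_right).trans (le_add_sum_marginal_of_submodular hsub B S)
  rw [sub_le_iff_le_add']
  exact hS.trans (add_le_add le_rfl hsum)

end Submodular

theorem le_pow_mul_add_mul_of_le_mul_add {d : ℕ → ℝ} {c ε : ℝ} (hc : 0 ≤ c) (hc1 : c ≤ 1)
    (hε : 0 ≤ ε) (hd : ∀ i, d (i + 1) ≤ c * d i + ε) (m : ℕ) :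
    d m ≤ c ^ m * d 0 + m * ε := by
  induction m with
  | zero => simp
  | succ n ih =>
    calc d (n + 1) ≤ c * d n + ε := hd n
      _ ≤ c * (c ^ n * d 0 + n * ε) + ε := by gcongr
      _ = c ^ (n + 1) * d 0 + c * (n * ε) + ε := by ring
      _ ≤ c ^ (n + 1) * d 0 + (n + 1 : ℕ) * ε := by
        push_cast
        linarith [mul_le_of_le_one_left (by positivity : (0 : ℝ) ≤ n * ε) hc1]

theorem one_sub_inv_pow_le_exp (k l : ℕ) (hk : 1 ≤ k) :
    (1 - (k : ℝ)⁻¹) ^ l ≤ Real.exp (-(l : ℝ) / k) := by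
  have h0 : 0 ≤ 1 - (k : ℝ)⁻¹ := sub_nonneg.2 (inv_le_one_of_one_le₀ (by exact_mod_cast hk))
  calc (1 - (k : ℝ)⁻¹) ^ l ≤ Real.exp (-(k : ℝ)⁻¹) ^ l := by
        gcongr; linarith [Real.add_one_le_exp (-(k : ℝ)⁻¹)]
    _ = Real.exp (-(l : ℝ) / k) := by rw [← Real.exp_nat_mul]; ring_nf

theorem stmt_14_general {Θ : Type*} [DecidableEq Θ] (Q : Finset Θ → ℝ)
    (hmono : ∀ A B : Finset Θ, A ⊆ B → Q A ≤ Q B)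
    (hsub : ∀ (A A' : Finset Θ) (θ : Θ),
      Q (A ∪ A' ∪ {θ}) - Q (A ∪ A') ≤ Q (A ∪ {θ}) - Q A)
    (hempty : Q ∅ = 0)
    (k : ℕ) (hk : 1 ≤ k) (ε : ℝ) (hε : 0 ≤ ε)
    (A : ℕ → Finset Θ)
    (hA0 : A 0 = ∅)
    (hgreedy : ∀ i, ∀ θ : Θ,
      Q (insert θ (A i)) - Q (A i) ≤ (Q (A (i + 1)) - Q (A i)) + ε) :
    ∀ l ≤ k, ∀ Astar : Finset Θ, Astar.card = k →
      Q (A l) ≥ (1 - Real.exp (-(l : ℝ) / (k : ℝ))) * Q Astar - (k : ℝ) * ε := by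
  intro l hl Astar hcard
  have hkpos : (0 : ℝ) < k := by exact_mod_cast hk
  have hc : 0 ≤ 1 - (k : ℝ)⁻¹ := sub_nonneg.2 (inv_le_one_of_one_le₀ (by exact_mod_cast hk))
  have hgap : ∀ i, Q Astar - Q (A (i + 1)) ≤ (1 - (k : ℝ)⁻¹) * (Q Astar - Q (A i)) + ε := by
    intro i
    have h := sub_le_card_nsmul_of_marginal_le hmono hsub (hgreedy i) Astar
    rw [hcard, nsmul_eq_mul] at h
    field_simp
    nlinarith
  have hunroll := le_pow_mul_add_mul_of_le_mul_add (d := fun i => Q Astar - Q (A i)) hc (by simp) hε hgap l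
  have hQstar : 0 ≤ Q Astar := hempty ▸ hmono _ _ (empty_subset _)
  have hexp := mul_le_mul_of_nonneg_right (one_sub_inv_pow_le_exp k l hk) hQstar
  have hlk : (l : ℝ) * ε ≤ k * ε := by gcongr
  rw [hA0, hempty, sub_zero] at hunroll
  nlinarith

/-- Additive-error greedy guarantee for every prefix length `l`. -/
theorem stmt_14 {Θ : Type*} [DecidableEq Θ] (Q : Finset Θ → ℝ)
    (hmono : ∀ A B : Finset Θ, A ⊆ B → Q A ≤ Q B)
    (hsub : ∀ (A A' : Finset Θ) (θ : Θ),
      Q (A ∪ A' ∪ {θ}) - Q (A ∪ A') ≤ Q (A ∪ {θ}) - Q A)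
    (hempty : Q ∅ = 0)
    (k : ℕ) (hk : 1 ≤ k) (ε : ℝ) (hε : 0 ≤ ε)
    (A : ℕ → Finset Θ) (θseq : ℕ → Θ)
    (hA0 : A 0 = ∅) (hAsucc : ∀ i, A (i + 1) = insert (θseq (i + 1)) (A i))
    (hgreedy : ∀ i, ∀ θ : Θ,
      Q (insert θ (A i)) - Q (A i) ≤ (Q (A (i + 1)) - Q (A i)) + ε) :
    ∀ l ≤ k, ∀ Astar : Finset Θ, Astar.card = k →
      Q (A l) ≥ (1 - Real.exp (-(l : ℝ) / (k : ℝ))) * Q Astar - (k : ℝ) * ε :=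
  stmt_14_general Q hmono hsub hempty k hk ε hε A hA0 hgreedy
end
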